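/- For every integer m ≥ 0, the convolution identity Σ_{l=0}^{m+1} (B_{2l}/(2l)!) · (B^{(2m+2)}_{2m+2-2l}(m+1)/(2m+2-2l)!) = 0 holds, where B_{2l} are Bernoulli numbers and B^{(α)}_k(t) generalized Bernoulli polynomials. -/

import Mathlib

noncomputable section

open scoped BigOperators

/-- The generalized Bernoulli polynomial `B^{(α)}_n(t)`, defined by the generating
function `(x/(eˣ-1))^α e^{tx} = Σ_n B^{(α)}_n(t) xⁿ/n!`. -/
def genBernoulli (α n : ℕ) (t : ℝ) : ℝ :=
  (n.factorial : ℝ) *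
    PowerSeries.coeff (R := ℝ) n
      (((PowerSeries.mk fun k => (1 : ℝ) / (k + 1).factorial)⁻¹) ^ α *
        PowerSeries.rescale t (PowerSeries.exp ℝ))

/-!
With `𝔅 = x/(eˣ-1)`, the sum is the `x^{2m+2}`-coefficient of `𝔅 · 𝔅^{2m+2} e^{(m+1)x}` with its
odd-index terms removed. The odd Bernoulli numbers beyond `B₁` vanish, and both that full
coefficient and the `B₁`-term are diagonal values `B^{(n+1)}_n(m+1)` with `n > m`. These vanish
because `B^{(n+1)}_n(t) = (t-1)(t-2)⋯(t-n)`, a product formula that follows, coefficient by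
coefficient, from the differential equation `x𝔅' = 𝔅 - 𝔅² - x𝔅`.
-/

open PowerSeries Finset Nat

namespace PowerSeries

section GenBernoulliSeries

variable (A : Type*) [CommRing A] [Algebra ℚ A]

def genBernoulliSeries (α : ℕ) (t : A) : A⟦X⟧ :=
  bernoulliPowerSeries A ^ α * rescale t (exp A)

variable {A}

theorem genBernoulliSeries_succ (α : ℕ) (t : A) :
    genBernoulliSeries A (α + 1) t = bernoulliPowerSeries A * genBernoulliSeries A α t := by
  rw [genBernoulliSeries, genBernoulliSeries, _root_.pow_succ', mul_assoc]

theorem derivative_rescale_exp (t : A) :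
    d⁄dX A (rescale t (exp A)) = C t * rescale t (exp A) := by
  ext n
  have hfac : (1 / (n + 1)! : ℚ) * (n + 1) = 1 / n ! := by
    rw [factorial_succ]; push_cast; field_simp
  rw [coeff_derivative, coeff_C_mul, coeff_rescale, coeff_rescale, coeff_exp, coeff_exp,
    ← map_natCast (algebraMap ℚ A), ← map_one (algebraMap ℚ A), ← map_add, mul_assoc,
    ← map_mul, hfac, pow_succ]
  ring

theorem X_mul_derivative_bernoulliPowerSeries :
    X * d⁄dX A (bernoulliPowerSeries A) =
      bernoulliPowerSeries A - bernoulliPowerSeries A ^ 2 - X * bernoulliPowerSeries A := by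
  set B := bernoulliPowerSeries A
  have hB : B * (exp A - 1) = X := bernoulliPowerSeries_mul_exp_sub_one A
  have hexp : d⁄dX A (exp A) = exp A := by
    simpa [rescale_one] using derivative_rescale_exp (1 : A)
  have hD : d⁄dX A B * (exp A - 1) + B * exp A = 1 := by
    have := congrArg (d⁄dX A) hB
    rw [Derivation.leibniz, map_sub, hexp, derivative_one, derivative_X, smul_eq_mul,
      smul_eq_mul, sub_zero] at this
    linear_combination this
  linear_combination B * hD - (d⁄dX A B + B) * hB

theorem succ_mul_coeff_succ_genBernoulliSeries (t : A) (n : ℕ) :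
    (n + 1) * coeff (n + 1) (genBernoulliSeries A (n + 2) t) =
      (t - (n + 1)) * coeff n (genBernoulliSeries A (n + 1) t) := by
  set B := bernoulliPowerSeries A
  set G := genBernoulliSeries A (n + 1) t
  have hdG : X * d⁄dX A G = C t * (X * G) +
      C ((n : A) + 1) * (G - genBernoulliSeries A (n + 2) t - X * G) := by
    simp only [G, genBernoulliSeries, Derivation.leibniz, Derivation.leibniz_pow,
      derivative_rescale_exp, smul_eq_mul, nsmul_eq_mul, Nat.add_sub_cancel, map_add, map_natCast,
      map_one, Nat.cast_add, Nat.cast_one]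
    linear_combination ((n + 1 : A⟦X⟧) * rescale t (exp A) * B ^ n) *
      X_mul_derivative_bernoulliPowerSeries (A := A)
  have h := congrArg (coeff (n + 1)) hdG
  rw [coeff_succ_X_mul, coeff_derivative, map_add, coeff_C_mul, coeff_C_mul,
    coeff_succ_X_mul, map_sub, map_sub, coeff_succ_X_mul] at h
  linear_combination h

theorem factorial_mul_coeff_genBernoulliSeries_succ_self (t : A) (n : ℕ) :
    n ! * coeff n (genBernoulliSeries A (n + 1) t) = ∏ i ∈ range n, (t - (i + 1)) := by
  induction n with
  | zero => simp [genBernoulliSeries, bernoulliPowerSeries, coeff_mul, coeff_rescale]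
  | succ n ih =>
    rw [prod_range_succ, ← ih, factorial_succ, Nat.cast_mul, mul_comm ((n + 1 : ℕ) : A), mul_assoc,
      Nat.cast_succ, succ_mul_coeff_succ_genBernoulliSeries]
    ring

end GenBernoulliSeries

theorem exp_sub_one_eq_X_mul (K : Type*) [Field K] [CharZero K] :
    exp K - 1 = X * mk fun k => (1 : K) / (k + 1)! := by
  ext (_ | n)
  · simp
  · simp [coeff_exp, coeff_succ_X_mul]

theorem inv_mk_one_div_factorial_succ (K : Type*) [Field K] [CharZero K] :
    (mk fun k => (1 : K) / (k + 1)!)⁻¹ = bernoulliPowerSeries K := by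
  rw [PowerSeries.inv_eq_iff_mul_eq_one (by simp), mul_comm]
  refine mul_left_cancel₀ (X_ne_zero (R := K)) ?_
  rw [mul_one, ← mul_assoc, ← exp_sub_one_eq_X_mul, mul_comm]
  exact bernoulliPowerSeries_mul_exp_sub_one K

end PowerSeries

theorem Finset.sum_range_two_mul_add_one {M : Type*} [AddCommMonoid M] (f : ℕ → M) (n : ℕ) :
    ∑ k ∈ range (2 * n + 1), f k =
      ∑ l ∈ range (n + 1), f (2 * l) + ∑ l ∈ range n, f (2 * l + 1) := by
  induction n with
  | zero => simp
  | succ n ih =>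
    rw [show 2 * (n + 1) + 1 = 2 * n + 1 + 1 + 1 by ring, sum_range_succ, sum_range_succ, ih,
      sum_range_succ (fun l => f (2 * l)) (n + 1), sum_range_succ (fun l => f (2 * l + 1)) n,
      show 2 * n + 1 + 1 = 2 * (n + 1) by ring]
    abel

theorem genBernoulli_div_factorial (α n : ℕ) (t : ℝ) :
    genBernoulli α n t / n ! = coeff n (genBernoulliSeries ℝ α t) := by
  rw [genBernoulli, inv_mk_one_div_factorial_succ, mul_div_cancel_left₀ _ (by positivity)]
  rfl

theorem genBernoulli_succ_self (n : ℕ) (t : ℝ) :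
    genBernoulli (n + 1) n t = ∏ i ∈ range n, (t - (i + 1)) := by
  rw [genBernoulli, inv_mk_one_div_factorial_succ]
  exact factorial_mul_coeff_genBernoulliSeries_succ_self t n

theorem genBernoulli_succ_self_eq_zero {m n : ℕ} (h : m < n) :
    genBernoulli (n + 1) n (m + 1) = 0 := by
  rw [genBernoulli_succ_self]
  exact prod_eq_zero (mem_range.2 h) (sub_self _)

theorem sum_bernoulli_mul_genBernoulli (α N : ℕ) (t : ℝ) :
    ∑ k ∈ range (N + 1), (bernoulli k : ℝ) / k ! * (genBernoulli α (N - k) t / (N - k)!) =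
      genBernoulli (α + 1) N t / N ! := by
  simp only [genBernoulli_div_factorial]
  rw [genBernoulliSeries_succ, coeff_mul, Nat.sum_antidiagonal_eq_sum_range_succ_mk]
  simp [bernoulliPowerSeries]

/-- the convolution identity
`Σ_{l=0}^{m+1} (B_{2l}/(2l)!)·(B^{(2m+2)}_{2m+2-2l}(m+1)/(2m+2-2l)!) = 0`,
where `B_{2l}` are the Bernoulli numbers. -/
theorem stmt11 (m : ℕ) :
    ∑ l ∈ Finset.range (m + 2),
        ((bernoulli (2 * l) : ℝ) / ((2 * l).factorial : ℝ))
          * (genBernoulli (2 * m + 2) (2 * m + 2 - 2 * l) ((m : ℝ) + 1)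
              / ((2 * m + 2 - 2 * l).factorial : ℝ))
      = 0 := by
  set f : ℕ → ℝ := fun k =>
    (bernoulli k : ℝ) / k ! * (genBernoulli (2 * m + 2) (2 * m + 2 - k) (m + 1) / (2 * m + 2 - k)!)
  have htotal : ∑ k ∈ range (2 * m + 2 + 1), f k = 0 := by
    rw [sum_bernoulli_mul_genBernoulli, genBernoulli_succ_self_eq_zero (by omega), zero_div]
  have hodd : ∑ l ∈ range (m + 1), f (2 * l + 1) = 0 := sum_eq_zero fun l _ => by
    rcases l with _ | l
    · simp [f, genBernoulli_succ_self_eq_zero (show m < 2 * m + 1 by omega)]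
    · simp [f, bernoulli_eq_zero_of_odd (odd_two_mul_add_one _) (by omega : 1 < 2 * (l + 1) + 1)]
  rwa [show 2 * m + 2 = 2 * (m + 1) by ring, sum_range_two_mul_add_one, hodd, add_zero] at htotal
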